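/- arXiv:1105.1608 — 2 statements merged into one kernel-verified Lean document; each statement's English description precedes it below -/
import Mathlib

section
/- Let T > 0, 0 < ε₁ < T and C > 0. Let E : [T − ε₁, T) → ℝ be a differentiable nonnegative function satisfying E′(t) ≤ (T − t)⁻¹ (C − E(t)/2) for all t ∈ [T − ε₁, T). Then the function t ↦ (E(t) − 2C)/√(T − t) is nonincreasing on [T − ε₁, T), and consequently E(t) ≤ 2C + √((T − t)/ε₁) · (E(T − ε₁) − 2C) for all t ∈ [T − ε₁, T). -/
/-!
The inequality `E' ≤ (T - t)⁻¹ (C - E / 2)` says exactly that `E - 2C` decays at least like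
the solution `√(T - t)` of the homogeneous equation `y' = -y / (2 (T - t))`. Hence the quotient
`(E - 2C) / √(T - t)` has nonpositive derivative, and comparing its value at `t` with its value
at the left endpoint gives the bound.
-/

open Set

theorem hasDerivAt_sqrt_const_sub {T t : ℝ} (ht : t < T) :
    HasDerivAt (fun s => √(T - s)) (-(1 / (2 * √(T - t)))) t := by
  have h := (Real.hasDerivAt_sqrt (sub_pos.2 ht).ne').comp t ((hasDerivAt_id t).const_sub T)
  simpa [Function.comp_def, mul_comm] using h

theorem HasDerivAt.div_sqrt_const_sub {g : ℝ → ℝ} {g' T t : ℝ} (hg : HasDerivAt g g' t)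
    (ht : t < T) :
    HasDerivAt (fun s => g s / √(T - s)) ((g' + g t / (2 * (T - t))) / √(T - t)) t := by
  have hpos : 0 < T - t := sub_pos.2 ht
  have hsqrt : 0 < √(T - t) := Real.sqrt_pos.2 hpos
  refine (hg.div (hasDerivAt_sqrt_const_sub ht) hsqrt.ne').congr_deriv ?_
  rw [Real.sq_sqrt hpos.le]
  field_simp
  rw [Real.sq_sqrt hpos.le]
  ring

theorem antitoneOn_sub_div_sqrt_const_sub {E E' : ℝ → ℝ} {a T C : ℝ}
    (hderiv : ∀ t ∈ Ico a T, HasDerivAt E (E' t) t)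
    (hineq : ∀ t ∈ Ico a T, E' t ≤ (T - t)⁻¹ * (C - E t / 2)) :
    AntitoneOn (fun t => (E t - 2 * C) / √(T - t)) (Ico a T) := by
  have hF : ∀ t ∈ Ico a T, HasDerivAt (fun s => (E s - 2 * C) / √(T - s))
      ((E' t + (E t - 2 * C) / (2 * (T - t))) / √(T - t)) t :=
    fun t ht => ((hderiv t ht).sub_const _).div_sqrt_const_sub ht.2
  refine antitoneOn_of_hasDerivWithinAt_nonpos (convex_Ico a T)
    (fun t ht => (hF t ht).continuousAt.continuousWithinAt)
    (fun t ht => (hF t (interior_subset ht)).hasDerivWithinAt) fun t ht => ?_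
  rw [interior_Ico] at ht
  have ht' := Ioo_subset_Ico_self ht
  have hpos : 0 < T - t := sub_pos.2 ht.2
  refine div_nonpos_of_nonpos_of_nonneg ?_ (Real.sqrt_nonneg _)
  calc E' t + (E t - 2 * C) / (2 * (T - t))
      ≤ (T - t)⁻¹ * (C - E t / 2) + (E t - 2 * C) / (2 * (T - t)) := by
        gcongr; exact hineq t ht'
    _ = 0 := by field_simp; ring

theorem AntitoneOn.le_add_sqrt_div_mul {E : ℝ → ℝ} {a T K t : ℝ}
    (hanti : AntitoneOn (fun s => (E s - K) / √(T - s)) (Ico a T)) (ha : a < T)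
    (ht : t ∈ Ico a T) :
    E t ≤ K + √((T - t) / (T - a)) * (E a - K) := by
  have hle := hanti ⟨le_rfl, ha⟩ ht ht.1
  have hsqrt : 0 < √(T - t) := Real.sqrt_pos.2 (sub_pos.2 ht.2)
  rw [Real.sqrt_div (sub_pos.2 ht.2).le, div_mul_eq_mul_div, mul_div_assoc,
    ← sub_le_iff_le_add', ← div_le_iff₀' hsqrt]
  exact hle

theorem singular_ode_comparison_general
    (T ε₁ C : ℝ) (hε₁ : 0 < ε₁)
    (E E' : ℝ → ℝ)
    (hderiv : ∀ t ∈ Set.Ico (T - ε₁) T, HasDerivAt E (E' t) t)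
    (hineq : ∀ t ∈ Set.Ico (T - ε₁) T, E' t ≤ (T - t)⁻¹ * (C - E t / 2)) :
    AntitoneOn (fun t => (E t - 2 * C) / Real.sqrt (T - t)) (Set.Ico (T - ε₁) T) ∧
      ∀ t ∈ Set.Ico (T - ε₁) T,
        E t ≤ 2 * C + Real.sqrt ((T - t) / ε₁) * (E (T - ε₁) - 2 * C) := by
  have hanti := antitoneOn_sub_div_sqrt_const_sub hderiv hineq
  refine ⟨hanti, fun t ht => ?_⟩
  simpa only [sub_sub_cancel] using hanti.le_add_sqrt_div_mul (sub_lt_self T hε₁) ht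

/-- Singular differential inequality comparison: if `E ≥ 0` on `[T-ε₁, T)` satisfies
`E′(t) ≤ (T-t)⁻¹ (C - E(t)/2)`, then `t ↦ (E(t) - 2C)/√(T-t)` is nonincreasing there,
and `E(t) ≤ 2C + √((T-t)/ε₁) (E(T-ε₁) - 2C)`. -/
theorem singular_ode_comparison
    (T ε₁ C : ℝ) (hT : 0 < T) (hε₁ : 0 < ε₁) (hε₁T : ε₁ < T) (hC : 0 < C)
    (E E' : ℝ → ℝ)
    (hderiv : ∀ t ∈ Set.Ico (T - ε₁) T, HasDerivAt E (E' t) t)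
    (hnonneg : ∀ t ∈ Set.Ico (T - ε₁) T, 0 ≤ E t)
    (hineq : ∀ t ∈ Set.Ico (T - ε₁) T, E' t ≤ (T - t)⁻¹ * (C - E t / 2)) :
    AntitoneOn (fun t => (E t - 2 * C) / Real.sqrt (T - t)) (Set.Ico (T - ε₁) T) ∧
      ∀ t ∈ Set.Ico (T - ε₁) T,
        E t ≤ 2 * C + Real.sqrt ((T - t) / ε₁) * (E (T - ε₁) - 2 * C) :=
  singular_ode_comparison_general T ε₁ C hε₁ E E' hderiv hineq
end

section
/- Let T ∈ ℝ, t₀ < T, 0 < η < 1, set h = (1 + η)/2, and let ᾱ > 0, J > 0. Define u : [t₀, T) → ℝ by u(t) = { (η ᾱ/(1 − h)) [ (T − t₀)^{1−h} − (T − t)^{1−h} ] + J^{−η} }^{1/η}. Then u is differentiable on [t₀, T), satisfies u′(t) = ᾱ u(t)^{1−η} (T − t)^{−h} and u(t₀) = J^{−1}, and u(t) ≤ { c (T − t₀)^{1−h} + J^{−η} }^{1/η} for all t ∈ [t₀, T), where c = η ᾱ/(1 − h). Moreover, if v : [t₀, T) → ℝ is continuous, nonnegative, and satisfies v(t) ≤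 J^{−1} + ᾱ ∫_{t₀}^t v(s)^{1−η} (T − s)^{−h} ds for all t ∈ [t₀, T), then v(t) ≤ u(t) for all t ∈ [t₀, T). -/
/-!
The substitution `w = u ^ η` turns the Bernoulli equation `u' = ᾱ u^{1-η} (T-t)^{-h}` into the
linear equation `w' = η ᾱ (T-t)^{-h}`, solved by `w(t) = J^{-η} + η ∫_{t₀}^t ᾱ (T-s)^{-h} ds`;
the kernel is integrable up to `T` because `h < 1`. For the comparison, `v` is dominated by
`G(t) = J⁻¹ + ᾱ ∫_{t₀}^t v^{1-η} (T-s)^{-h} ds`, and as `1 - η ≥ 0` this gives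
`(G^η)' = η G^{η-1} ᾱ v^{1-η} (T-t)^{-h} ≤ η ᾱ (T-t)^{-h} = w'`. With `G(t₀)^η = w(t₀)` we get
`v^η ≤ G^η ≤ w`, i.e. `v ≤ u` (a Bihari-type inequality).
-/

open intervalIntegral

/-- The explicit solution of the Bernoulli-type singular ODE
`u′ = ᾱ u^{1-η} (T-t)^{-h}`, `u(t₀) = J⁻¹`, with `h = (1+η)/2`. -/
noncomputable def bernoulliSol (T t₀ η h ᾱ J : ℝ) : ℝ → ℝ := fun t =>
  (η * ᾱ / (1 - h) * ((T - t₀) ^ (1 - h) - (T - t) ^ (1 - h)) + J ^ (-η)) ^ (1 / η)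

open Set Real

section Primitive

variable {E : Type*} [NormedAddCommGroup E] [NormedSpace ℝ E] {g : ℝ → E} {a b : ℝ}

theorem hasDerivAt_integral_of_continuousOn [CompleteSpace E] (hg : ContinuousOn g (Icc a b)) {x : ℝ}
    (hx : x ∈ Ioo a b) : HasDerivAt (fun u => ∫ s in a..u, g s) (g x) x :=
  integral_hasDerivAt_right
    ((hg.mono (Icc_subset_Icc_right hx.2.le)).intervalIntegrable_of_Icc hx.1.le)
    ((hg.mono Ioo_subset_Icc_self).stronglyMeasurableAtFilter isOpen_Ioo x hx)
    (hg.continuousAt (Icc_mem_nhds hx.1 hx.2))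

theorem continuousOn_integral_of_continuousOn (hab : a ≤ b) (hg : ContinuousOn g (Icc a b)) :
    ContinuousOn (fun u => ∫ s in a..u, g s) (Icc a b) := by
  simpa only [uIcc_of_le hab] using
    continuousOn_primitive_interval' (hg.intervalIntegrable_of_Icc hab) left_mem_uIcc

end Primitive

theorem integral_sub_rpow_neg {T a b h : ℝ} (hh : h < 1) :
    ∫ s in a..b, (T - s) ^ (-h) = ((T - a) ^ (1 - h) - (T - b) ^ (1 - h)) / (1 - h) := by
  rw [integral_comp_sub_left (fun x => x ^ (-h)), integral_rpow (Or.inl (by linarith)),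
    neg_add_eq_sub]

theorem rpow_sub_one_mul_rpow_one_sub_le_one {η x y : ℝ} (hη : η ≤ 1) (hx : 0 ≤ x)
    (hxy : x ≤ y) (hy : 0 < y) : y ^ (η - 1) * x ^ (1 - η) ≤ 1 :=
  calc y ^ (η - 1) * x ^ (1 - η) ≤ y ^ (η - 1) * y ^ (1 - η) := by gcongr
    _ = 1 := by rw [← rpow_add hy, sub_add_sub_cancel, sub_self, rpow_zero]

theorem HasDerivAt.rpow_one_div_bernoulli {f : ℝ → ℝ} {η a t : ℝ}
    (hf : HasDerivAt f (η * a) t) (hpos : 0 < f t) (hη : η ≠ 0) :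
    HasDerivAt (fun s => f s ^ (1 / η)) (a * (f t ^ (1 / η)) ^ (1 - η)) t := by
  convert hf.rpow_const (p := 1 / η) (Or.inl hpos.ne') using 1
  rw [← rpow_mul hpos.le]
  field_simp

/-- Bihari's inequality for the power nonlinearity `x ↦ x ^ (1 - η)`. -/
theorem rpow_le_add_integral_of_le_add_integral_rpow {η C a b : ℝ} {v k : ℝ → ℝ}
    (hη0 : 0 < η) (hη1 : η ≤ 1) (hC : 0 < C) (hab : a ≤ b)
    (hv : ContinuousOn v (Icc a b)) (hv0 : ∀ x ∈ Icc a b, 0 ≤ v x)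
    (hk : ContinuousOn k (Icc a b)) (hk0 : ∀ x ∈ Icc a b, 0 ≤ k x)
    (hle : ∀ x ∈ Icc a b, v x ≤ C + ∫ s in a..x, v s ^ (1 - η) * k s) :
    v b ^ η ≤ C ^ η + η * ∫ s in a..b, k s := by
  set G : ℝ → ℝ := fun x => C + ∫ s in a..x, v s ^ (1 - η) * k s with hG
  have hvk : ContinuousOn (fun s => v s ^ (1 - η) * k s) (Icc a b) :=
    (hv.rpow_const fun _ _ => Or.inr (by linarith)).mul hk
  have hG_pos : ∀ x ∈ Icc a b, 0 < G x := fun x hx =>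
    add_pos_of_pos_of_nonneg hC <| integral_nonneg hx.1 fun s hs =>
      have hs' : s ∈ Icc a b := ⟨hs.1, hs.2.trans hx.2⟩
      mul_nonneg (rpow_nonneg (hv0 s hs') _) (hk0 s hs')
  have hmono : MonotoneOn (fun x => (C ^ η + η * ∫ s in a..x, k s) - G x ^ η) (Icc a b) := by
    refine monotoneOn_of_hasDerivWithinAt_nonneg (convex_Icc a b)
      (f' := fun x => η * k x - v x ^ (1 - η) * k x * η * G x ^ (η - 1)) ?_ ?_ ?_
    · exact (continuousOn_const.add (continuousOn_const.mul
        (continuousOn_integral_of_continuousOn hab hk))).sub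
        ((continuousOn_const.add (continuousOn_integral_of_continuousOn hab hvk)).rpow_const
          fun x hx => Or.inl (hG_pos x hx).ne')
    · rw [interior_Icc]
      intro x hx
      exact ((((hasDerivAt_integral_of_continuousOn hk hx).const_mul η).const_add _).sub
        (((hasDerivAt_integral_of_continuousOn hvk hx).const_add C).rpow_const
          (Or.inl (hG_pos x (Ioo_subset_Icc_self hx)).ne'))).hasDerivWithinAt
    · rw [interior_Icc]
      intro x hx
      have hx' := Ioo_subset_Icc_self hx
      have hfactor : η * k x - v x ^ (1 - η) * k x * η * G x ^ (η - 1)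
          = η * k x * (1 - G x ^ (η - 1) * v x ^ (1 - η)) := by ring
      rw [hfactor]
      exact mul_nonneg (mul_nonneg hη0.le (hk0 x hx')) <| sub_nonneg.2 <|
        rpow_sub_one_mul_rpow_one_sub_le_one hη1 (hv0 x hx') (hle x hx') (hG_pos x hx')
  have hend := hmono (left_mem_Icc.2 hab) (right_mem_Icc.2 hab) hab
  simp only [hG, integral_same, mul_zero, add_zero, sub_self] at hend
  calc v b ^ η ≤ G b ^ η :=
        rpow_le_rpow (hv0 b (right_mem_Icc.2 hab)) (hle b (right_mem_Icc.2 hab)) hη0.le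
    _ ≤ C ^ η + η * ∫ s in a..b, k s := by linarith

noncomputable def bernoulliBase (T t₀ η h ᾱ J : ℝ) (t : ℝ) : ℝ :=
  η * ᾱ / (1 - h) * ((T - t₀) ^ (1 - h) - (T - t) ^ (1 - h)) + J ^ (-η)

section Bernoulli

variable {T t₀ η h ᾱ J : ℝ}

theorem bernoulliSol_eq_rpow (t : ℝ) :
    bernoulliSol T t₀ η h ᾱ J t = bernoulliBase T t₀ η h ᾱ J t ^ (1 / η) :=
  rfl

theorem bernoulliBase_eq_add_integral (hh : h < 1) (t : ℝ) :
    bernoulliBase T t₀ η h ᾱ J t = J ^ (-η) + η * ∫ s in t₀..t, ᾱ * (T - s) ^ (-h) := by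
  rw [integral_const_mul, integral_sub_rpow_neg hh, bernoulliBase]
  ring

theorem hasDerivAt_bernoulliBase (hh : h ≠ 1) {t : ℝ} (ht : t < T) :
    HasDerivAt (bernoulliBase T t₀ η h ᾱ J) (η * (ᾱ * (T - t) ^ (-h))) t := by
  have hpow : HasDerivAt (fun s => (T - s) ^ (1 - h)) (-1 * (1 - h) * (T - t) ^ (1 - h - 1)) t :=
    ((hasDerivAt_id t).const_sub T).rpow_const (Or.inl (sub_pos.2 ht).ne')
  refine ((((hasDerivAt_const t ((T - t₀) ^ (1 - h))).sub hpow).const_mul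
    (η * ᾱ / (1 - h))).add_const (J ^ (-η))).congr_deriv ?_
  rw [sub_sub_cancel_left]
  field_simp [sub_ne_zero.2 hh.symm]
  ring

theorem bernoulliBase_pos (hh : h < 1) (hη : 0 ≤ η) (hᾱ : 0 ≤ ᾱ) (hJ : 0 < J) {t : ℝ}
    (ht : t ∈ Icc t₀ T) : 0 < bernoulliBase T t₀ η h ᾱ J t := by
  have hc : 0 ≤ η * ᾱ / (1 - h) := div_nonneg (mul_nonneg hη hᾱ) (sub_pos.2 hh).le
  have hpow_le : (T - t) ^ (1 - h) ≤ (T - t₀) ^ (1 - h) :=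
    rpow_le_rpow (sub_nonneg.2 ht.2) (by linarith [ht.1]) (sub_pos.2 hh).le
  have hJη := rpow_pos_of_pos hJ (-η)
  unfold bernoulliBase
  linarith [mul_nonneg hc (sub_nonneg.2 hpow_le)]

theorem hasDerivAt_bernoulliSol (hη : 0 < η) (hh : h < 1) (hᾱ : 0 ≤ ᾱ) (hJ : 0 < J) {t : ℝ}
    (ht : t ∈ Ico t₀ T) :
    HasDerivAt (bernoulliSol T t₀ η h ᾱ J)
      (ᾱ * bernoulliSol T t₀ η h ᾱ J t ^ (1 - η) * (T - t) ^ (-h)) t :=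
  ((hasDerivAt_bernoulliBase hh.ne ht.2).rpow_one_div_bernoulli
    (bernoulliBase_pos hh hη.le hᾱ hJ (Ico_subset_Icc_self ht)) hη.ne').congr_deriv
    (mul_right_comm _ _ _)

theorem bernoulliSol_self (hη : η ≠ 0) (hJ : 0 ≤ J) : bernoulliSol T t₀ η h ᾱ J t₀ = J⁻¹ := by
  rw [bernoulliSol_eq_rpow, bernoulliBase, sub_self, mul_zero, zero_add, ← rpow_mul hJ,
    neg_mul, mul_one_div_cancel hη, rpow_neg_one]

theorem bernoulliSol_le (hη : 0 < η) (hh : h < 1) (hᾱ : 0 ≤ ᾱ) (hJ : 0 < J) {t : ℝ}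
    (ht : t ∈ Ico t₀ T) :
    bernoulliSol T t₀ η h ᾱ J t ≤ (η * ᾱ / (1 - h) * (T - t₀) ^ (1 - h) + J ^ (-η)) ^ (1 / η) := by
  have hc : 0 ≤ η * ᾱ / (1 - h) := div_nonneg (mul_nonneg hη.le hᾱ) (sub_pos.2 hh).le
  have hTt : 0 ≤ (T - t) ^ (1 - h) := rpow_nonneg (sub_nonneg.2 ht.2.le) _
  refine rpow_le_rpow (bernoulliBase_pos hh hη.le hᾱ hJ (Ico_subset_Icc_self ht)).le ?_
    (one_div_nonneg.2 hη.le)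
  linarith [mul_nonneg hc hTt]

theorem le_bernoulliSol_of_le_add_integral (hη0 : 0 < η) (hη1 : η ≤ 1) (hh : h < 1)
    (hᾱ : 0 ≤ ᾱ) (hJ : 0 < J) {v : ℝ → ℝ} (hv : ContinuousOn v (Ico t₀ T))
    (hv0 : ∀ t ∈ Ico t₀ T, 0 ≤ v t)
    (hle : ∀ t ∈ Ico t₀ T, v t ≤ J⁻¹ + ᾱ * ∫ s in t₀..t, v s ^ (1 - η) * (T - s) ^ (-h))
    {t : ℝ} (ht : t ∈ Ico t₀ T) : v t ≤ bernoulliSol T t₀ η h ᾱ J t := by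
  have hsub : Icc t₀ t ⊆ Ico t₀ T := Icc_subset_Ico_right ht.2
  have hk : ContinuousOn (fun s => ᾱ * (T - s) ^ (-h)) (Icc t₀ t) :=
    continuousOn_const.mul <| (continuousOn_const.sub continuousOn_id).rpow_const
      fun s hs => Or.inl (sub_pos.2 (hsub hs).2).ne'
  have hbihari := rpow_le_add_integral_of_le_add_integral_rpow hη0 hη1 (inv_pos.2 hJ) ht.1
    (hv.mono hsub) (fun s hs => hv0 s (hsub hs)) hk
    (fun s hs => mul_nonneg hᾱ (rpow_nonneg (sub_nonneg.2 (hsub hs).2.le) _))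
    (fun s hs => by simpa only [mul_left_comm _ ᾱ, integral_const_mul] using hle s (hsub hs))
  rw [inv_rpow hJ.le, ← rpow_neg hJ.le, ← bernoulliBase_eq_add_integral hh] at hbihari
  rw [bernoulliSol_eq_rpow, one_div]
  exact (le_rpow_inv_iff_of_pos (hv0 t ht)
    (bernoulliBase_pos hh hη0.le hᾱ hJ (Ico_subset_Icc_self ht)).le hη0).2 hbihari

end Bernoulli

theorem bernoulli_singular_ode_general
    (T t₀ η h ᾱ J : ℝ) (hη0 : 0 < η) (hη1 : η < 1)
    (hh : h = (1 + η) / 2) (hᾱ : 0 < ᾱ) (hJ : 0 < J) :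
    (∀ t ∈ Set.Ico t₀ T,
        HasDerivAt (bernoulliSol T t₀ η h ᾱ J)
          (ᾱ * (bernoulliSol T t₀ η h ᾱ J t) ^ (1 - η) * (T - t) ^ (-h)) t) ∧
      bernoulliSol T t₀ η h ᾱ J t₀ = J⁻¹ ∧
      (∀ t ∈ Set.Ico t₀ T,
        bernoulliSol T t₀ η h ᾱ J t
          ≤ (η * ᾱ / (1 - h) * (T - t₀) ^ (1 - h) + J ^ (-η)) ^ (1 / η)) ∧
      ∀ v : ℝ → ℝ, ContinuousOn v (Set.Ico t₀ T) → (∀ t ∈ Set.Ico t₀ T, 0 ≤ v t) →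
        (∀ t ∈ Set.Ico t₀ T,
          v t ≤ J⁻¹ + ᾱ * ∫ s in t₀..t, v s ^ (1 - η) * (T - s) ^ (-h)) →
        ∀ t ∈ Set.Ico t₀ T, v t ≤ bernoulliSol T t₀ η h ᾱ J t := by
  have hh1 : h < 1 := by linarith
  exact ⟨fun t => hasDerivAt_bernoulliSol hη0 hh1 hᾱ.le hJ, bernoulliSol_self hη0.ne' hJ.le,
    fun t => bernoulliSol_le hη0 hh1 hᾱ.le hJ,
    fun v hv hv0 hle t => le_bernoulliSol_of_le_add_integral hη0 hη1.le hh1 hᾱ.le hJ hv hv0 hle⟩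

/-- The explicit solution `u` of the Bernoulli-type singular ODE satisfies
`u′(t) = ᾱ u(t)^{1-η} (T-t)^{-h}`, `u(t₀) = J⁻¹`,
`u(t) ≤ (c (T-t₀)^{1-h} + J^{-η})^{1/η}` with `c = η ᾱ/(1-h)`, and every continuous
nonnegative `v` with `v(t) ≤ J⁻¹ + ᾱ ∫_{t₀}^t v(s)^{1-η} (T-s)^{-h} ds` is bounded
by `u`. -/
theorem bernoulli_singular_ode
    (T t₀ η h ᾱ J : ℝ) (ht₀ : t₀ < T) (hη0 : 0 < η) (hη1 : η < 1)
    (hh : h = (1 + η) / 2) (hᾱ : 0 < ᾱ) (hJ : 0 < J) :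
    (∀ t ∈ Set.Ico t₀ T,
        HasDerivAt (bernoulliSol T t₀ η h ᾱ J)
          (ᾱ * (bernoulliSol T t₀ η h ᾱ J t) ^ (1 - η) * (T - t) ^ (-h)) t) ∧
      bernoulliSol T t₀ η h ᾱ J t₀ = J⁻¹ ∧
      (∀ t ∈ Set.Ico t₀ T,
        bernoulliSol T t₀ η h ᾱ J t
          ≤ (η * ᾱ / (1 - h) * (T - t₀) ^ (1 - h) + J ^ (-η)) ^ (1 / η)) ∧
      ∀ v : ℝ → ℝ, ContinuousOn v (Set.Ico t₀ T) → (∀ t ∈ Set.Ico t₀ T, 0 ≤ v t) →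
        (∀ t ∈ Set.Ico t₀ T,
          v t ≤ J⁻¹ + ᾱ * ∫ s in t₀..t, v s ^ (1 - η) * (T - s) ^ (-h)) →
        ∀ t ∈ Set.Ico t₀ T, v t ≤ bernoulliSol T t₀ η h ᾱ J t :=
  bernoulli_singular_ode_general T t₀ η h ᾱ J hη0 hη1 hh hᾱ hJ
end
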